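/- Let I be a closed, proper ideal of F, let φ be the F-filter on X generated by B(I), and let f ∈ F. The following statements are equivalent: (i) f ∈ I; (ii) f̂(p) = 0 for every p ∈ φ̂, where f̂ is the unique continuous function δX → ℂ with f = f̂ ∘ e; (iii) X(f,r) ∈ φ for every r > 0. -/

import Mathlib

open Set

variable {X : Type*} [Nonempty X] [TopologicalSpace X] [DiscreteTopology X]

/-- The set `X(f,r) = {x ∈ X : |f(x)| ≤ r}`. -/
def XSet (f : BoundedContinuousFunction X ℂ) (r : ℝ) : Set X := {x | ‖f x‖ ≤ r}

/-- An `F`-family on `X`: a nonempty collection of nonempty subsets of `X` such that for every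
member `A ≠ X` there are `B` in the collection and `f ∈ F` with `f(B) = {0}`,
`f(X \ A) = {1}`. -/
def FFamily (F : StarSubalgebra ℂ (BoundedContinuousFunction X ℂ)) (𝒜 : Set (Set X)) : Prop :=
  𝒜.Nonempty ∧ (∀ A ∈ 𝒜, A.Nonempty) ∧
    ∀ A ∈ 𝒜, A ≠ Set.univ →
      ∃ B ∈ 𝒜, ∃ f ∈ F, (∀ x ∈ B, f x = 0) ∧ ∀ x ∉ A, f x = 1

/-- A filter on the set `X`, viewed as a collection of subsets. -/
def IsSetFilter (φ : Set (Set X)) : Prop :=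
  φ.Nonempty ∧ (∀ A ∈ φ, ∀ B ∈ φ, A ∩ B ∈ φ) ∧
    (∀ A ∈ φ, ∀ B : Set X, A ⊆ B → B ∈ φ) ∧ ∅ ∉ φ

/-- An `F`-filter on `X` is a filter which is also an `F`-family. -/
def FFilter (F : StarSubalgebra ℂ (BoundedContinuousFunction X ℂ)) (φ : Set (Set X)) : Prop :=
  IsSetFilter φ ∧ FFamily F φ

/-- An `F`-ultrafilter on `X` is an `F`-filter maximal with respect to inclusion. -/
def FUltrafilter (F : StarSubalgebra ℂ (BoundedContinuousFunction X ℂ)) (φ : Set (Set X)) : Prop :=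
  FFilter F φ ∧ ∀ ψ : Set (Set X), FFilter F ψ → φ ⊆ ψ → ψ = φ

/-- `F₀ = {f ∈ F : X(f,r) ≠ ∅ for all r > 0}`. -/
def FZero (F : StarSubalgebra ℂ (BoundedContinuousFunction X ℂ)) :
    Set (BoundedContinuousFunction X ℂ) :=
  {f | f ∈ F ∧ ∀ r : ℝ, 0 < r → (XSet f r).Nonempty}

/-- `Z(A) = {f ∈ F : f(x) = 0 for all x ∈ A}`. -/
def ZSet (F : StarSubalgebra ℂ (BoundedContinuousFunction X ℂ)) (A : Set X) :
    Set (BoundedContinuousFunction X ℂ) :=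
  {f | f ∈ F ∧ ∀ x ∈ A, f x = 0}

/-- The finite intersection property. -/
def FIP (𝒜 : Set (Set X)) : Prop :=
  ∀ s : Finset (Set X), ↑s ⊆ 𝒜 → s.Nonempty → (⋂₀ (s : Set (Set X))).Nonempty

/-- A filter base on `X`. -/
def IsFilterBase (ℬ : Set (Set X)) : Prop :=
  ℬ.Nonempty ∧ ∅ ∉ ℬ ∧ ∀ A ∈ ℬ, ∀ B ∈ ℬ, ∃ C ∈ ℬ, C ⊆ A ∩ B

/-- The filter generated by a filter base. -/
def genFilter (ℬ : Set (Set X)) : Set (Set X) :=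
  {A | ∃ B ∈ ℬ, B ⊆ A}

/-- `δX`, the space of all `F`-ultrafilters on `X`. -/
def Delta (F : StarSubalgebra ℂ (BoundedContinuousFunction X ℂ)) : Type _ :=
  {p : Set (Set X) // FUltrafilter F p}

/-- `Â = {p ∈ δX : A ∈ p}`. -/
def hatSet (F : StarSubalgebra ℂ (BoundedContinuousFunction X ℂ)) (A : Set X) :
    Set (Delta F) :=
  {p | A ∈ p.1}

/-- The topology on `δX` having `{Â : A ⊆ X}` as a base. -/
instance (F : StarSubalgebra ℂ (BoundedContinuousFunction X ℂ)) :
    TopologicalSpace (Delta F) :=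
  TopologicalSpace.generateFrom {S | ∃ A : Set X, S = hatSet F A}

/-- For an `F`-filter `φ`, `φ̂ = {p ∈ δX : φ ⊆ p}`. -/
def hatF (F : StarSubalgebra ℂ (BoundedContinuousFunction X ℂ)) (φ : Set (Set X)) :
    Set (Delta F) :=
  {p | φ ⊆ p.1}

/-- `τ(F)`, the weakest topology on `X` making every member of `F` continuous. -/
noncomputable def tauF (F : StarSubalgebra ℂ (BoundedContinuousFunction X ℂ)) : TopologicalSpace X :=
  ⨅ f ∈ (F : Set (BoundedContinuousFunction X ℂ)),
    TopologicalSpace.induced (fun x => f x) inferInstance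

/-- `B(I) = {X(f,r) : f ∈ I, r > 0}` for an ideal `I` of `F`. -/
def BIdeal (F : StarSubalgebra ℂ (BoundedContinuousFunction X ℂ)) (I : Ideal F) :
    Set (Set X) :=
  {S | ∃ f ∈ I, ∃ r : ℝ, 0 < r ∧ S = XSet (f : BoundedContinuousFunction X ℂ) r}

/-!
(i) ⇒ (iii) is immediate. For (iii) ⇒ (i), if `X(g,s) ⊆ X(f,ε)` with `g ∈ I`, then
`f (1 - (1 - c|g|²)^N) ∈ I` is `ε`-close to `f` for a suitable `c` and large `N`, and `I` is closed.
For (iii) ⇒ (ii), every member of an `F`-filter is a `τ(F)`-neighbourhood of some point `x`, so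
every basic neighbourhood of `p ∈ φ̂` contains points `e x` with `|f̂ (e x)| = |f x|` small.
For (ii) ⇒ (iii), `f̂ p` is the limit of `f` along `p`, which exists by compactness of the range of
`f` and maximality of `p`; if `X(f,r) ∉ φ`, then `B(I)` and the sets `{|f| ≥ t}`, `0 < t < r`,
generate an `F`-filter, and an `F`-ultrafilter `p` containing it lies in `φ̂` but has
`|f̂ p| ≥ r/2`.
The separating functions are all of the form `ψ ∘ f`, which lie in the closed `*`-subalgebra `F`
by the continuous functional calculus.
-/

open scoped BoundedContinuousFunction Topology

namespace BoundedContinuousFunction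

variable {X : Type*} [TopologicalSpace X]

noncomputable def evalStarAlgHom (x : X) : (X →ᵇ ℂ) →⋆ₐ[ℂ] ℂ where
  toFun f := f x
  map_one' := rfl
  map_mul' _ _ := rfl
  map_zero' := rfl
  map_add' _ _ := rfl
  commutes' _ := rfl
  map_star' _ := rfl

theorem cfc_apply_eq {ψ : ℂ → ℂ} (hψ : Continuous ψ) (f : X →ᵇ ℂ) (x : X) :
    cfc ψ f x = ψ (f x) :=
  ((evalStarAlgHom x).map_cfc ψ f (hφ := (evalCLM ℂ x).continuous)).trans
    (cfc_algebraMap (A := ℂ) (f x) ψ)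

theorem star_mul_self_apply (g : X →ᵇ ℂ) (x : X) : (star g * g) x = ((‖g x‖ ^ 2 : ℝ) : ℂ) := by
  simp [Complex.conj_mul']

end BoundedContinuousFunction

section BumpFunctions

variable {X : Type*} [TopologicalSpace X] {F : StarSubalgebra ℂ (X →ᵇ ℂ)}

theorem exists_mem_eq_zero_eq_one (hF : IsClosed (F : Set (X →ᵇ ℂ))) {f : X →ᵇ ℂ} (hf : f ∈ F)
    (c : ℂ) {α β : ℝ} (hαβ : α < β) :
    ∃ v ∈ F, (∀ x, ‖f x - c‖ ≤ α → v x = 0) ∧ (∀ x, β ≤ ‖f x - c‖ → v x = 1) := by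
  set ramp : ℝ → ℝ := fun t => max 0 (min 1 ((t - α) / (β - α)))
  set ψ : ℂ → ℂ := fun z => (ramp ‖z - c‖ : ℂ)
  have hψ : Continuous ψ := by fun_prop
  refine ⟨cfc ψ f, cfc_mem _ hf, fun x hx => ?_, fun x hx => ?_⟩ <;>
    rw [BoundedContinuousFunction.cfc_apply_eq hψ]
  · have : (‖f x - c‖ - α) / (β - α) ≤ 0 :=
      div_nonpos_of_nonpos_of_nonneg (by linarith) (by linarith)
    simp [ψ, ramp, this]
  · have : 1 ≤ (‖f x - c‖ - α) / (β - α) := (one_le_div (by linarith)).2 (by linarith)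
    simp [ψ, ramp, this]

end BumpFunctions

section SetFilter

variable {X : Type*} {p : Set (Set X)}

theorem IsSetFilter.univ_mem (hp : IsSetFilter p) : univ ∈ p :=
  hp.1.elim fun A hA => hp.2.2.1 A hA univ (subset_univ A)

def IsSetFilter.toFilter (hp : IsSetFilter p) : Filter X where
  sets := p
  univ_sets := hp.univ_mem
  sets_of_superset hA hAB := hp.2.2.1 _ hA _ hAB
  inter_sets hA hB := hp.2.1 _ hA _ hB

theorem IsSetFilter.neBot_toFilter (hp : IsSetFilter p) : hp.toFilter.NeBot :=
  ⟨fun h => hp.2.2.2 (Filter.empty_mem_iff_bot.2 h)⟩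

theorem IsSetFilter.inter_mem (hp : IsSetFilter p) {A B : Set X} (hA : A ∈ p) (hB : B ∈ p) :
    A ∩ B ∈ p :=
  hp.2.1 A hA B hB

theorem IsSetFilter.directedOn (hp : IsSetFilter p) : DirectedOn (· ⊇ ·) p :=
  fun A hA B hB => ⟨A ∩ B, hp.inter_mem hA hB, inter_subset_left, inter_subset_right⟩

theorem isFilterBase_image2_inter {ψ 𝒟 : Set (Set X)} (hψ : ψ.Nonempty)
    (hψd : DirectedOn (· ⊇ ·) ψ) (h𝒟 : 𝒟.Nonempty) (h𝒟d : DirectedOn (· ⊇ ·) 𝒟)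
    (hne : ∀ A ∈ ψ, ∀ D ∈ 𝒟, (A ∩ D).Nonempty) : IsFilterBase (image2 (· ∩ ·) ψ 𝒟) := by
  refine ⟨hψ.image2 h𝒟, ?_, ?_⟩
  · rintro ⟨A, hA, D, hD, h⟩
    exact (hne A hA D hD).ne_empty h
  · rintro _ ⟨A, hA, D, hD, rfl⟩ _ ⟨A', hA', D', hD', rfl⟩
    obtain ⟨A'', hA'', hAA'', hA'A''⟩ := hψd A hA A' hA'
    obtain ⟨D'', hD'', hDD'', hD'D''⟩ := h𝒟d D hD D' hD'
    refine ⟨A'' ∩ D'', mem_image2_of_mem hA'' hD'', ?_⟩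
    exact subset_inter (inter_subset_inter hAA'' hDD'') (inter_subset_inter hA'A'' hD'D'')

end SetFilter

def IsFSeparated {X : Type*} [TopologicalSpace X] (F : StarSubalgebra ℂ (X →ᵇ ℂ))
    (ℬ : Set (Set X)) : Prop :=
  ∀ A ∈ ℬ, ∃ B ∈ ℬ, ∃ u ∈ F, (∀ x ∈ B, u x = 0) ∧ ∀ x ∉ A, u x = 1

section FFilter

variable {X : Type*} [TopologicalSpace X] {F : StarSubalgebra ℂ (X →ᵇ ℂ)} {p : Set (Set X)}

theorem FFilter.nonempty_of_mem (hp : FFilter F p) {A : Set X} (hA : A ∈ p) : A.Nonempty :=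
  hp.2.2.1 A hA

theorem FFilter.isFSeparated (hp : FFilter F p) : IsFSeparated F p := by
  intro A hA
  by_cases hAu : A = univ
  · exact ⟨univ, hp.1.univ_mem, 0, zero_mem F, fun _ _ => rfl,
      fun x hx => (hx (hAu ▸ mem_univ x)).elim⟩
  · exact hp.2.2.2 A hA hAu

theorem fFilter_genFilter {ℬ : Set (Set X)} (hℬ : IsFilterBase ℬ) (hsep : IsFSeparated F ℬ) :
    FFilter F (genFilter ℬ) := by
  obtain ⟨⟨B₀, hB₀⟩, hempty, hdir⟩ := hℬ
  have hne : ∀ B ∈ ℬ, B.Nonempty := fun B hB => nonempty_iff_ne_empty.2 fun h => hempty (h ▸ hB)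
  refine ⟨⟨⟨B₀, B₀, hB₀, subset_rfl⟩, ?_, ?_, ?_⟩, ⟨B₀, B₀, hB₀, subset_rfl⟩, ?_, ?_⟩
  · rintro A ⟨B, hB, hBA⟩ A' ⟨B', hB', hBA'⟩
    obtain ⟨C, hC, hCBB'⟩ := hdir B hB B' hB'
    exact ⟨C, hC, hCBB'.trans (inter_subset_inter hBA hBA')⟩
  · rintro A ⟨B, hB, hBA⟩ A' hAA'
    exact ⟨B, hB, hBA.trans hAA'⟩
  · rintro ⟨B, hB, hB0⟩
    exact hempty (subset_empty_iff.1 hB0 ▸ hB)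
  · rintro A ⟨B, hB, hBA⟩
    exact (hne B hB).mono hBA
  · rintro A ⟨B, hB, hBA⟩ -
    obtain ⟨B', hB', u, hu, hu0, hu1⟩ := hsep B hB
    exact ⟨B', ⟨B', hB', subset_rfl⟩, u, hu, hu0, fun x hx => hu1 x fun h => hx (hBA h)⟩

theorem IsFSeparated.image2_inter {ψ 𝒟 : Set (Set X)} (hψ : IsFSeparated F ψ)
    (h𝒟 : IsFSeparated F 𝒟) : IsFSeparated F (image2 (· ∩ ·) ψ 𝒟) := by
  rintro _ ⟨A, hA, D, hD, rfl⟩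
  obtain ⟨B, hB, u, hu, hu0, hu1⟩ := hψ A hA
  obtain ⟨B', hB', v, hv, hv0, hv1⟩ := h𝒟 D hD
  refine ⟨B ∩ B', mem_image2_of_mem hB hB', u + v - u * v, sub_mem (add_mem hu hv) (mul_mem hu hv),
    fun x hx => ?_, fun x hx => ?_⟩
  · simp [hu0 x hx.1, hv0 x hx.2]
  · rcases not_and_or.1 hx with h | h
    · simp [hu1 x h]
    · simp [hv1 x h]

theorem fFilter_sUnion {c : Set (Set (Set X))} (hc : ∀ p ∈ c, FFilter F p)
    (hchain : IsChain (· ⊆ ·) c) {p₀ : Set (Set X)} (hp₀ : p₀ ∈ c) : FFilter F (⋃₀ c) := by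
  obtain ⟨A₀, hA₀⟩ := (hc p₀ hp₀).1.1
  refine ⟨⟨⟨A₀, p₀, hp₀, hA₀⟩, ?_, ?_, ?_⟩, ⟨A₀, p₀, hp₀, hA₀⟩, ?_, ?_⟩
  · rintro A ⟨p, hp, hA⟩ B ⟨q, hq, hB⟩
    rcases hchain.total hp hq with h | h
    · exact ⟨q, hq, (hc q hq).1.2.1 A (h hA) B hB⟩
    · exact ⟨p, hp, (hc p hp).1.2.1 A hA B (h hB)⟩
  · rintro A ⟨p, hp, hA⟩ B hAB
    exact ⟨p, hp, (hc p hp).1.2.2.1 A hA B hAB⟩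
  · rintro ⟨p, hp, h⟩
    exact (hc p hp).1.2.2.2 h
  · rintro A ⟨p, hp, hA⟩
    exact (hc p hp).2.2.1 A hA
  · rintro A ⟨p, hp, hA⟩ hAu
    obtain ⟨B, hB, u, hu, hu0, hu1⟩ := (hc p hp).2.2.2 A hA hAu
    exact ⟨B, ⟨p, hp, hB⟩, u, hu, hu0, hu1⟩

theorem exists_fUltrafilter_superset {ψ : Set (Set X)} (hψ : FFilter F ψ) :
    ∃ p, FUltrafilter F p ∧ ψ ⊆ p := by
  obtain ⟨p, hψp, hp, hmax⟩ := zorn_subset_nonempty {p | FFilter F p}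
    (fun c hc hchain ⟨p₀, hp₀⟩ => ⟨⋃₀ c, fFilter_sUnion hc hchain hp₀,
      fun _ => subset_sUnion_of_mem⟩) ψ hψ
  exact ⟨p, ⟨hp, fun q hq hpq => (hmax hq hpq).antisymm hpq⟩, hψp⟩

end FFilter

section Extension

variable {X : Type*} [TopologicalSpace X] {F : StarSubalgebra ℂ (X →ᵇ ℂ)}

theorem IsSetFilter.exists_clusterPt {p : Set (Set X)} (hp : IsSetFilter p) (f : X →ᵇ ℂ) :
    ∃ c : ℂ, ∀ A ∈ p, ∀ ε > 0, ∃ x ∈ A, ‖f x - c‖ ≤ ε := by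
  have := hp.neBot_toFilter
  have hmap : Filter.map f hp.toFilter ≤ Filter.principal (Metric.closedBall 0 ‖f‖) :=
    Filter.le_principal_iff.2 (Filter.mem_map.2 (Filter.univ_mem' fun x => by
      simpa using f.norm_coe_le_norm x))
  obtain ⟨c, -, hc⟩ := isCompact_closedBall (0 : ℂ) ‖f‖ hmap
  refine ⟨c, fun A hA ε hε => ?_⟩
  obtain ⟨_, hy, x, hxA, rfl⟩ := clusterPt_iff_nonempty.1 hc
    (Metric.closedBall_mem_nhds c hε) (Filter.image_mem_map (m := f) (f := hp.toFilter) hA)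
  exact ⟨x, hxA, by simpa [dist_eq_norm] using hy⟩

theorem FUltrafilter.exists_lim (hF : IsClosed (F : Set (X →ᵇ ℂ))) {p : Set (Set X)}
    (hp : FUltrafilter F p) {f : X →ᵇ ℂ} (hf : f ∈ F) :
    ∃ c : ℂ, ∀ ε > 0, {x | ‖f x - c‖ ≤ ε} ∈ p := by
  obtain ⟨c, hc⟩ := hp.1.1.exists_clusterPt f
  set D : ℝ → Set X := fun ε => {x | ‖f x - c‖ ≤ ε}
  have hdir : DirectedOn (· ⊇ ·) (D '' Ioi 0) := by
    rintro _ ⟨ε, hε, rfl⟩ _ ⟨ε', hε', rfl⟩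
    exact ⟨D (min ε ε'), mem_image_of_mem D (mem_Ioi.2 (lt_min hε hε')),
      fun x (hx : ‖f x - c‖ ≤ _) => hx.trans (min_le_left _ _),
      fun x (hx : ‖f x - c‖ ≤ _) => hx.trans (min_le_right _ _)⟩
  have hsep : IsFSeparated F (D '' Ioi 0) := by
    rintro _ ⟨ε, hε, rfl⟩
    obtain ⟨v, hv, hv0, hv1⟩ := exists_mem_eq_zero_eq_one hF hf c (half_lt_self hε)
    exact ⟨D (ε / 2), mem_image_of_mem D (mem_Ioi.2 (half_pos hε)), v, hv, hv0,
      fun x hx => hv1 x (not_le.1 hx).le⟩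
  have hbase : IsFilterBase (image2 (· ∩ ·) p (D '' Ioi 0)) := by
    refine isFilterBase_image2_inter hp.1.1.1 hp.1.1.directedOn
      ⟨D 1, 1, mem_Ioi.2 one_pos, rfl⟩ hdir ?_
    rintro A hA _ ⟨ε, hε, rfl⟩
    obtain ⟨x, hxA, hx⟩ := hc A hA ε hε
    exact ⟨x, hxA, hx⟩
  have hp_eq := hp.2 _ (fFilter_genFilter hbase (hp.1.isFSeparated.image2_inter hsep))
    fun A hA => ⟨A ∩ D 1, mem_image2_of_mem hA ⟨1, mem_Ioi.2 one_pos, rfl⟩, inter_subset_left⟩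
  refine ⟨c, fun ε hε => hp_eq ▸ ⟨univ ∩ D ε, ?_, inter_subset_right⟩⟩
  exact mem_image2_of_mem hp.1.1.univ_mem (mem_image_of_mem D hε)

theorem isOpen_hatSet (A : Set X) : IsOpen (hatSet F A) :=
  TopologicalSpace.isOpen_generateFrom_of_mem ⟨A, rfl⟩

theorem isTopologicalBasis_hatSet :
    TopologicalSpace.IsTopologicalBasis {S : Set (Delta F) | ∃ A : Set X, S = hatSet F A} := by
  refine ⟨?_, ?_, rfl⟩
  · rintro _ ⟨A, rfl⟩ _ ⟨B, rfl⟩ p ⟨hpA, hpB⟩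
    refine ⟨hatSet F (A ∩ B), ⟨A ∩ B, rfl⟩, p.2.1.1.inter_mem hpA hpB, fun q hq => ?_⟩
    exact ⟨q.2.1.1.2.2.1 _ hq A inter_subset_left, q.2.1.1.2.2.1 _ hq B inter_subset_right⟩
  · exact eq_univ_of_forall fun p => mem_sUnion_of_mem p.2.1.1.univ_mem ⟨univ, rfl⟩

theorem exists_continuous_lim (hF : IsClosed (F : Set (X →ᵇ ℂ))) {f : X →ᵇ ℂ} (hf : f ∈ F) :
    ∃ g : C(Delta F, ℂ), ∀ p : Delta F, ∀ ε > 0, {x | ‖f x - g p‖ ≤ ε} ∈ p.1 := by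
  choose g hg using fun p : Delta F => p.2.exists_lim hF hf
  refine ⟨⟨g, continuous_iff_continuousAt.2 fun p => Metric.tendsto_nhds.2 fun ε hε => ?_⟩, hg⟩
  filter_upwards [(isOpen_hatSet _).mem_nhds (hg p (ε / 4) (by positivity))] with q hq
  obtain ⟨x, hxp, hxq⟩ :=
    q.2.1.nonempty_of_mem (q.2.1.1.inter_mem hq (hg q (ε / 4) (by positivity)))
  calc dist (g q) (g p) ≤ dist (f x) (g q) + dist (f x) (g p) := dist_triangle_left _ _ _
    _ ≤ ε / 4 + ε / 4 :=
      add_le_add (by simpa [dist_eq_norm] using hxq) (by simpa [dist_eq_norm] using hxp)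
    _ < ε := by linarith

end Extension

section Evaluation

variable {X : Type*} [TopologicalSpace X] {F : StarSubalgebra ℂ (X →ᵇ ℂ)}

theorem continuous_tauF {u : X →ᵇ ℂ} (hu : u ∈ F) : Continuous[tauF F, _] u :=
  continuous_iInf_dom (continuous_iInf_dom (i := hu) continuous_induced_dom)

theorem FFilter.exists_mem_nhds_tauF {p : Set (Set X)} (hp : FFilter F p) {A : Set X}
    (hA : A ∈ p) : ∃ x, A ∈ @nhds X (tauF F) x := by
  obtain ⟨B, hB, u, hu, hu0, hu1⟩ := hp.isFSeparated A hA
  obtain ⟨x, hx⟩ := hp.nonempty_of_mem hB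
  have hopen : IsOpen[tauF F] (u ⁻¹' Metric.ball 0 1) :=
    continuous_def.1 (continuous_tauF hu) _ Metric.isOpen_ball
  refine ⟨x, Filter.mem_of_superset (@IsOpen.mem_nhds X (tauF F) _ _ hopen ?_) fun y hy => ?_⟩
  · simp [hu0 x hx]
  · by_contra hyA
    simp [hu1 y hyA] at hy

theorem mem_of_mem_e {e : X → Delta F}
    (he : ∀ x : X, (e x).1 = {A : Set X | A ∈ @nhds X (tauF F) x}) {x : X} {A : Set X}
    (hA : A ∈ (e x).1) : x ∈ A := by
  rw [he x] at hA
  exact @mem_of_mem_nhds X (tauF F) _ _ hA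

end Evaluation

section IdealFilter

variable {X : Type*} [TopologicalSpace X] {F : StarSubalgebra ℂ (X →ᵇ ℂ)} {I : Ideal F}

theorem directedOn_BIdeal : DirectedOn (· ⊇ ·) (BIdeal F I) := by
  rintro _ ⟨g, hg, s, hs, rfl⟩ _ ⟨g', hg', s', hs', rfl⟩
  set k : F := star g * g + star g' * g'
  have hk : ∀ x, ‖(k : X →ᵇ ℂ) x‖ = ‖(g : X →ᵇ ℂ) x‖ ^ 2 + ‖(g' : X →ᵇ ℂ) x‖ ^ 2 := fun x => by
    simp only [k, AddMemClass.coe_add, MulMemClass.coe_mul, StarMemClass.coe_star,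
      BoundedContinuousFunction.coe_add, Pi.add_apply,
      BoundedContinuousFunction.star_mul_self_apply, ← Complex.ofReal_add, Complex.norm_real]
    exact Real.norm_of_nonneg (by positivity)
  refine ⟨XSet k (min (s ^ 2) (s' ^ 2)), ⟨k, I.add_mem (I.mul_mem_left _ hg)
    (I.mul_mem_left _ hg'), _, by positivity, rfl⟩, fun x (hx : ‖_‖ ≤ _) => ?_,
    fun x (hx : ‖_‖ ≤ _) => ?_⟩ <;> rw [hk] at hx
  · refine (pow_le_pow_iff_left₀ (norm_nonneg _) hs.le two_ne_zero).1 ?_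
    linarith [min_le_left (s ^ 2) (s' ^ 2), sq_nonneg ‖(g' : X →ᵇ ℂ) x‖]
  · refine (pow_le_pow_iff_left₀ (norm_nonneg _) hs'.le two_ne_zero).1 ?_
    linarith [min_le_right (s ^ 2) (s' ^ 2), sq_nonneg ‖(g : X →ᵇ ℂ) x‖]

theorem isFSeparated_BIdeal (hF : IsClosed (F : Set (X →ᵇ ℂ))) : IsFSeparated F (BIdeal F I) := by
  rintro _ ⟨g, hg, s, hs, rfl⟩
  obtain ⟨v, hv, hv0, hv1⟩ := exists_mem_eq_zero_eq_one hF g.2 0 (half_lt_self hs)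
  refine ⟨_, ⟨g, hg, s / 2, half_pos hs, rfl⟩, v, hv,
    fun x (hx : ‖_‖ ≤ _) => hv0 x (by simpa using hx),
    fun x (hx : ¬ ‖_‖ ≤ _) => hv1 x (by simpa using (not_le.1 hx).le)⟩

end IdealFilter

section Approximation

variable {X : Type*} [TopologicalSpace X] {F : StarSubalgebra ℂ (X →ᵇ ℂ)} {I : Ideal F}

theorem exists_mem_dist_le_of_XSet_subset {f g : F} (hg : g ∈ I) {s ε : ℝ} (hs : 0 < s)
    (hε : 0 < ε) (hsub : XSet (g : X →ᵇ ℂ) s ⊆ XSet (f : X →ᵇ ℂ) ε) :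
    ∃ j ∈ I, dist f j ≤ ε := by
  -- With this `M`, `1 - |g|² / M` takes values in `[0, 1]`, and in `[0, θ]` off `X(g,s)`.
  set M := ‖(g : X →ᵇ ℂ)‖ ^ 2 + s ^ 2
  have hM : 0 < M := by positivity
  set θ := 1 - s ^ 2 / M
  have hθ0 : 0 ≤ θ := sub_nonneg.2 ((div_le_one hM).2 (by simp [M]))
  have hθ1 : θ < 1 := sub_lt_self 1 (by positivity)
  obtain ⟨N, hN⟩ : ∃ N : ℕ, ‖(f : X →ᵇ ℂ)‖ * θ ^ N ≤ ε := by
    have := (tendsto_pow_atTop_nhds_zero_of_lt_one hθ0 hθ1).const_mul ‖(f : X →ᵇ ℂ)‖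
    rw [mul_zero] at this
    exact (this.eventually (ge_mem_nhds hε)).exists
  set b : F := ((M⁻¹ : ℝ) : ℂ) • (star g * g)
  have hb : b ∈ I := I.smul_of_tower_mem _ (I.mul_mem_left _ hg)
  have hj : 1 - (1 - b) ^ N ∈ I := by
    rw [← Ideal.Quotient.eq_zero_iff_mem]
    simp [Ideal.Quotient.eq_zero_iff_mem.2 hb]
  refine ⟨f * (1 - (1 - b) ^ N), I.mul_mem_left f hj, ?_⟩
  have hval : ∀ x, ((f : X →ᵇ ℂ) - ((f * (1 - (1 - b) ^ N) : F) : X →ᵇ ℂ)) x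
      = (f : X →ᵇ ℂ) x * ((1 - ‖(g : X →ᵇ ℂ) x‖ ^ 2 / M : ℝ) : ℂ) ^ N := by
    intro x
    rw [← AddSubgroupClass.coe_sub, show f - f * (1 - (1 - b) ^ N) = f * (1 - b) ^ N by ring]
    simp [b, BoundedContinuousFunction.star_mul_self_apply, div_eq_inv_mul]
  have ht : ∀ x, 0 ≤ 1 - ‖(g : X →ᵇ ℂ) x‖ ^ 2 / M ∧ 1 - ‖(g : X →ᵇ ℂ) x‖ ^ 2 / M ≤ 1 := by
    intro x
    refine ⟨sub_nonneg.2 ((div_le_one hM).2 ?_), sub_le_self 1 (by positivity)⟩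
    have := (g : X →ᵇ ℂ).norm_coe_le_norm x
    nlinarith [norm_nonneg ((g : X →ᵇ ℂ) x)]
  rw [Subtype.dist_eq, dist_eq_norm, BoundedContinuousFunction.norm_le hε.le]
  intro x
  rw [hval, norm_mul, norm_pow, Complex.norm_real, Real.norm_of_nonneg (ht x).1]
  by_cases hx : ‖(g : X →ᵇ ℂ) x‖ ≤ s
  · exact (mul_le_of_le_one_right (norm_nonneg _) (pow_le_one₀ (ht x).1 (ht x).2)).trans (hsub hx)
  · have htθ : 1 - ‖(g : X →ᵇ ℂ) x‖ ^ 2 / M ≤ θ := by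
      change _ ≤ 1 - s ^ 2 / M
      gcongr
      exact (not_le.1 hx).le
    calc ‖(f : X →ᵇ ℂ) x‖ * (1 - ‖(g : X →ᵇ ℂ) x‖ ^ 2 / M) ^ N ≤ ‖(f : X →ᵇ ℂ)‖ * θ ^ N :=
          mul_le_mul ((f : X →ᵇ ℂ).norm_coe_le_norm x) (pow_le_pow_left₀ (ht x).1 htθ N)
            (pow_nonneg (ht x).1 N) (norm_nonneg _)
      _ ≤ ε := hN

end Approximation

section Characterization

variable {X : Type*} [TopologicalSpace X] {F : StarSubalgebra ℂ (X →ᵇ ℂ)} {I : Ideal F}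

theorem mem_of_forall_XSet_mem (hIc : IsClosed (I : Set F)) {f : F}
    (h : ∀ r > 0, XSet (f : X →ᵇ ℂ) r ∈ genFilter (BIdeal F I)) : f ∈ I := by
  rw [← SetLike.mem_coe, ← hIc.closure_eq, Metric.mem_closure_iff]
  intro ε hε
  obtain ⟨_, ⟨g, hg, s, hs, rfl⟩, hsub⟩ := h (ε / 2) (half_pos hε)
  obtain ⟨j, hj, hfj⟩ := exists_mem_dist_le_of_XSet_subset hg hs (half_pos hε) hsub
  exact ⟨j, hj, hfj.trans_lt (half_lt_self hε)⟩

theorem eq_zero_of_forall_XSet_mem {e : X → Delta F}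
    (he : ∀ x : X, (e x).1 = {A : Set X | A ∈ @nhds X (tauF F) x}) {f : X →ᵇ ℂ}
    (g : C(Delta F, ℂ)) (hg : ∀ x, f x = g (e x)) {p : Delta F} (hp : ∀ r > 0, XSet f r ∈ p.1) :
    g p = 0 := by
  refine norm_le_zero_iff.1 (le_of_forall_pos_le_add fun ε hε => ?_)
  obtain ⟨_, ⟨A, rfl⟩, hpA, hAg⟩ := isTopologicalBasis_hatSet.exists_subset_of_mem_open
    (show p ∈ g ⁻¹' Metric.ball (g p) (ε / 2) from Metric.mem_ball_self (half_pos hε))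
    (Metric.isOpen_ball.preimage g.continuous)
  obtain ⟨x, hx⟩ :=
    p.2.1.exists_mem_nhds_tauF (p.2.1.1.inter_mem hpA (hp (ε / 2) (half_pos hε)))
  have hex : e x ∈ hatSet F A := by
    change A ∈ (e x).1
    rw [he]
    exact Filter.mem_of_superset hx inter_subset_left
  have hfx : ‖f x‖ ≤ ε / 2 := (@mem_of_mem_nhds _ (tauF F) _ _ hx).2
  have hgx : dist (g (e x)) (g p) < ε / 2 := hAg hex
  rw [← hg, dist_eq_norm] at hgx
  linarith [norm_sub_norm_le (g p) (f x), norm_sub_rev (g p) (f x)]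

theorem exists_mem_hatF_norm_ge_of_XSet_not_mem (hF : IsClosed (F : Set (X →ᵇ ℂ))) {f : X →ᵇ ℂ}
    (hf : f ∈ F) {r : ℝ} (hr : 0 < r) (h : XSet f r ∉ genFilter (BIdeal F I)) :
    ∃ q ∈ hatF F (genFilter (BIdeal F I)), {x | r / 2 ≤ ‖f x‖} ∈ q.1 := by
  set Y : ℝ → Set X := fun t => {x | t ≤ ‖f x‖}
  have hdir : DirectedOn (· ⊇ ·) (Y '' Ioo 0 r) := by
    rintro _ ⟨t, ht, rfl⟩ _ ⟨t', ht', rfl⟩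
    exact ⟨Y (max t t'), mem_image_of_mem Y ⟨lt_max_of_lt_left ht.1, max_lt ht.2 ht'.2⟩,
      fun x (hx : _ ≤ ‖f x‖) => (le_max_left _ _).trans hx,
      fun x (hx : _ ≤ ‖f x‖) => (le_max_right _ _).trans hx⟩
  have hsep : IsFSeparated F (Y '' Ioo 0 r) := by
    rintro _ ⟨t, ht, rfl⟩
    have htt' : t < (t + r) / 2 := by linarith [ht.2]
    obtain ⟨v, hv, hv0, hv1⟩ := exists_mem_eq_zero_eq_one hF hf 0 htt'
    refine ⟨Y ((t + r) / 2), mem_image_of_mem Y ⟨by linarith [ht.1], by linarith [ht.2]⟩,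
      1 - v, sub_mem (one_mem F) hv, fun x (hx : _ ≤ ‖f x‖) => ?_, fun x (hx : ¬ _ ≤ ‖f x‖) => ?_⟩
    · simp [hv1 x (by simpa using hx)]
    · simp [hv0 x (by simpa using (not_le.1 hx).le)]
  have hne : ∀ A ∈ BIdeal F I, ∀ D ∈ Y '' Ioo 0 r, (A ∩ D).Nonempty := by
    rintro A hA _ ⟨t, ht, rfl⟩
    by_contra hempty
    refine h ⟨A, hA, fun x hxA => (?_ : ‖f x‖ ≤ r)⟩
    exact (not_le.1 fun hxY => hempty ⟨x, hxA, hxY⟩).le.trans ht.2.le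
  have hB₀ : XSet ((0 : F) : X →ᵇ ℂ) 1 ∈ BIdeal F I := ⟨0, I.zero_mem, 1, one_pos, rfl⟩
  have hY : Y (r / 2) ∈ Y '' Ioo 0 r := mem_image_of_mem Y ⟨half_pos hr, half_lt_self hr⟩
  have hbase := isFilterBase_image2_inter ⟨_, hB₀⟩ directedOn_BIdeal ⟨_, hY⟩ hdir hne
  obtain ⟨q, hq, hsub⟩ := exists_fUltrafilter_superset
    (fFilter_genFilter hbase ((isFSeparated_BIdeal hF).image2_inter hsep))
  exact ⟨⟨q, hq⟩,
    fun A ⟨B, hB, hBA⟩ =>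
      hsub ⟨B ∩ Y (r / 2), mem_image2_of_mem hB hY, inter_subset_left.trans hBA⟩,
    hsub ⟨_, mem_image2_of_mem hB₀ hY, inter_subset_right⟩⟩

theorem XSet_mem_of_forall_eq_zero (hF : IsClosed (F : Set (X →ᵇ ℂ))) {e : X → Delta F}
    (he : ∀ x : X, (e x).1 = {A : Set X | A ∈ @nhds X (tauF F) x}) {f : X →ᵇ ℂ} (hf : f ∈ F)
    (h : ∀ g : C(Delta F, ℂ), (∀ x, f x = g (e x)) → ∀ p ∈ hatF F (genFilter (BIdeal F I)),
      g p = 0) {r : ℝ} (hr : 0 < r) : XSet f r ∈ genFilter (BIdeal F I) := by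
  by_contra hr'
  obtain ⟨q, hq, hYq⟩ := exists_mem_hatF_norm_ge_of_XSet_not_mem hF hf hr hr'
  obtain ⟨g, hg⟩ := exists_continuous_lim hF hf
  have hfg : ∀ x, f x = g (e x) := fun x => eq_of_forall_dist_le fun ε hε => by
    simpa [dist_eq_norm] using mem_of_mem_e he (hg (e x) ε hε)
  obtain ⟨x, hx, hxY⟩ :=
    q.2.1.nonempty_of_mem (q.2.1.1.inter_mem (hg q (r / 4) (by positivity)) hYq)
  have hfx : ‖f x‖ ≤ r / 4 := by simpa [h g hfg q hq] using hx
  have hfx' : r / 2 ≤ ‖f x‖ := hxY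
  linarith

end Characterization

theorem stmt19_general (F : StarSubalgebra ℂ (BoundedContinuousFunction X ℂ)) (hF : IsClosed (F : Set (BoundedContinuousFunction X ℂ))) (e : X → Delta F) (he : ∀ x : X, (e x).1 = {A : Set X | A ∈ @nhds X (tauF F) x})
    (I : Ideal F) (hIc : IsClosed (I : Set F))
    (φ : Set (Set X)) (hφ : φ = genFilter (BIdeal F I)) (f : F) :
    List.TFAE
      [f ∈ I,
       ∀ g : C(Delta F, ℂ), (∀ x : X, (f : BoundedContinuousFunction X ℂ) x = g (e x)) →
         ∀ p ∈ hatF F φ, g p = 0,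
       ∀ r : ℝ, 0 < r → XSet (f : BoundedContinuousFunction X ℂ) r ∈ φ] := by
  subst hφ
  tfae_have 1 → 3 := fun hf r hr => ⟨_, ⟨f, hf, r, hr, rfl⟩, subset_rfl⟩
  tfae_have 3 → 1 := mem_of_forall_XSet_mem hIc
  tfae_have 3 → 2 := fun h g hg p hp => eq_zero_of_forall_XSet_mem he g hg fun r hr => hp (h r hr)
  tfae_have 2 → 3 := fun h r hr => XSet_mem_of_forall_eq_zero hF he f.2 h hr
  tfae_finish

theorem stmt19 (F : StarSubalgebra ℂ (BoundedContinuousFunction X ℂ)) (hF : IsClosed (F : Set (BoundedContinuousFunction X ℂ))) (e : X → Delta F) (he : ∀ x : X, (e x).1 = {A : Set X | A ∈ @nhds X (tauF F) x})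
    (I : Ideal F) (hIc : IsClosed (I : Set F)) (hIp : I ≠ ⊤)
    (φ : Set (Set X)) (hφ : φ = genFilter (BIdeal F I)) (f : F) :
    List.TFAE
      [f ∈ I,
       ∀ g : C(Delta F, ℂ), (∀ x : X, (f : BoundedContinuousFunction X ℂ) x = g (e x)) →
         ∀ p ∈ hatF F φ, g p = 0,
       ∀ r : ℝ, 0 < r → XSet (f : BoundedContinuousFunction X ℂ) r ∈ φ] :=
  stmt19_general F hF e he I hIc φ hφ f
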